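/- arXiv:math/0001136 — 4 statements merged into one kernel-verified Lean document; each statement's English description precedes it below -/
import Mathlib

section
/- Let R be a commutative ring, A a bialgebra over R with comultiplication Δ and counit ε, and let F be a Drinfeld twist for A. Then the twisted comultiplication Δ_F(a) = F · Δ(a) · F⁻¹ is coassociative: (Δ_F ⊗ id) ∘ Δ_F = (id ⊗ Δ_F) ∘ Δ_F as maps A → A ⊗ A ⊗ A. -/
open TensorProduct

noncomputable section

variable {R A : Type*} [CommRing R] [Ring A] [Algebra R A]

/-- The embedding `A ⊗ A → A ⊗ (A ⊗ A)`, `x ⊗ y ↦ x ⊗ (y ⊗ 1)`, i.e. `F ↦ F₁₂`. -/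
def emb12 : A ⊗[R] A →ₗ[R] A ⊗[R] (A ⊗[R] A) :=
  TensorProduct.map LinearMap.id ((TensorProduct.mk R A A).flip 1)

/-- The embedding `A ⊗ A → A ⊗ (A ⊗ A)`, `x ↦ 1 ⊗ x`, i.e. `F ↦ F₂₃`. -/
def emb23 : A ⊗[R] A →ₗ[R] A ⊗[R] (A ⊗[R] A) :=
  TensorProduct.mk R A (A ⊗[R] A) 1

/-- `D ⊗ id : A ⊗ A → A ⊗ (A ⊗ A)` (via the associator). -/
def tensorFst (D : A →ₗ[R] A ⊗[R] A) : A ⊗[R] A →ₗ[R] A ⊗[R] (A ⊗[R] A) :=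
  (TensorProduct.assoc R A A A).toLinearMap ∘ₗ TensorProduct.map D LinearMap.id

/-- `id ⊗ D : A ⊗ A → A ⊗ (A ⊗ A)`. -/
def tensorSnd (D : A →ₗ[R] A ⊗[R] A) : A ⊗[R] A →ₗ[R] A ⊗[R] (A ⊗[R] A) :=
  TensorProduct.map LinearMap.id D

/-- `e ⊗ id : A ⊗ A → A` (via `R ⊗ A ≅ A`). -/
def counitFst (e : A →ₗ[R] R) : A ⊗[R] A →ₗ[R] A :=
  (TensorProduct.lid R A).toLinearMap ∘ₗ TensorProduct.map e LinearMap.id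

/-- `id ⊗ e : A ⊗ A → A` (via `A ⊗ R ≅ A`). -/
def counitSnd (e : A →ₗ[R] R) : A ⊗[R] A →ₗ[R] A :=
  (TensorProduct.rid R A).toLinearMap ∘ₗ TensorProduct.map LinearMap.id e

/-- The comultiplication `D` twisted by `F`: `a ↦ F * D a * F⁻¹`. -/
def twistMap (F Finv : A ⊗[R] A) (D : A →ₗ[R] A ⊗[R] A) : A →ₗ[R] A ⊗[R] A :=
  LinearMap.mulRight R Finv ∘ₗ LinearMap.mulLeft R F ∘ₗ D

/-- `F` (with two-sided inverse `Finv`) is a Drinfeld twist with respect to the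
comultiplication `D` and the counit `e`: it is invertible, satisfies the cocycle equation
`F₁₂ · (D ⊗ id)(F) = F₂₃ · (id ⊗ D)(F)`, and the normalization
`(e ⊗ id)(F) = 1 = (id ⊗ e)(F)`. -/
def IsDrinfeldTwist (D : A →ₗ[R] A ⊗[R] A) (e : A →ₗ[R] R) (F Finv : A ⊗[R] A) : Prop :=
  F * Finv = 1 ∧ Finv * F = 1 ∧
    emb12 F * tensorFst D F = emb23 F * tensorSnd D F ∧
    counitFst e F = 1 ∧ counitSnd e F = 1

/-! Write `Δ_F = Ad F ∘ Δ`. Since `x ↦ F₁₂` and `Δ ⊗ id` are algebra maps,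
`(Δ_F ⊗ id)(x) = F₁₂ · (Δ ⊗ id)(x) · F₁₂⁻¹`, hence `(Δ_F ⊗ id)(Δ_F a)` is `(Δ ⊗ id)(Δ a)` conjugated
by the unit `F₁₂ · (Δ ⊗ id)(F)`. Symmetrically `(id ⊗ Δ_F)(Δ_F a)` is `(id ⊗ Δ)(Δ a)` conjugated by
`F₂₃ · (id ⊗ Δ)(F)`. The cocycle equation says the two units coincide, and coassociativity of `Δ`
identifies the conjugated elements. -/

section Conjugation

variable {M N : Type*} [Monoid M] [Monoid N]

theorem map_mul_map_conj_mul_map {H : Type*} [FunLike H M N] [MonoidHomClass H M N]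
    (f g : H) (u : Mˣ) (x : M) :
    f u * g (u * x * ↑u⁻¹) * f ↑u⁻¹ =
      ↑(Units.map (f : M →* N) u * Units.map (g : M →* N) u) * g x *
        ↑(Units.map (f : M →* N) u * Units.map (g : M →* N) u)⁻¹ := by
  simp [mul_assoc]

end Conjugation

def emb12AlgHom : A ⊗[R] A →ₐ[R] A ⊗[R] (A ⊗[R] A) :=
  (Algebra.TensorProduct.assoc R R R A A A).toAlgHom.comp Algebra.TensorProduct.includeLeft

theorem emb12AlgHom_apply (z : A ⊗[R] A) : emb12AlgHom z = emb12 z := by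
  induction z using TensorProduct.induction_on with
  | zero => simp
  | tmul x y => rfl
  | add u v hu hv => simp only [map_add, hu, hv]

theorem emb23_apply (z : A ⊗[R] A) :
    emb23 z = Algebra.TensorProduct.includeRight (A := A) z :=
  rfl

theorem tensorFst_twistMap (F Finv : A ⊗[R] A) (D : A →ₗ[R] A ⊗[R] A) (z : A ⊗[R] A) :
    tensorFst (twistMap F Finv D) z = emb12 F * tensorFst D z * emb12 Finv := by
  induction z using TensorProduct.induction_on with
  | zero => simp
  | tmul x y =>
    rw [← emb12AlgHom_apply, ← emb12AlgHom_apply]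
    change Algebra.TensorProduct.assoc R R R A A A ((F * D x * Finv) ⊗ₜ y) =
      Algebra.TensorProduct.assoc R R R A A A (F ⊗ₜ 1) *
        Algebra.TensorProduct.assoc R R R A A A (D x ⊗ₜ y) *
          Algebra.TensorProduct.assoc R R R A A A (Finv ⊗ₜ 1)
    rw [← map_mul, ← map_mul, Algebra.TensorProduct.tmul_mul_tmul,
      Algebra.TensorProduct.tmul_mul_tmul, one_mul, mul_one]
  | add u v hu hv => simp only [map_add, hu, hv, mul_add, add_mul]

theorem tensorSnd_twistMap (F Finv : A ⊗[R] A) (D : A →ₗ[R] A ⊗[R] A) (z : A ⊗[R] A) :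
    tensorSnd (twistMap F Finv D) z = emb23 F * tensorSnd D z * emb23 Finv := by
  induction z using TensorProduct.induction_on with
  | zero => simp
  | tmul x y =>
    simp [tensorSnd, twistMap, emb23_apply, Algebra.TensorProduct.tmul_mul_tmul]
  | add u v hu hv => simp only [map_add, hu, hv, mul_add, add_mul]

def tensorFstAlgHom (φ : A →ₐ[R] A ⊗[R] A) : A ⊗[R] A →ₐ[R] A ⊗[R] (A ⊗[R] A) :=
  (Algebra.TensorProduct.assoc R R R A A A).toAlgHom.comp
    (Algebra.TensorProduct.map φ (AlgHom.id R A))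

theorem tensorFstAlgHom_apply (φ : A →ₐ[R] A ⊗[R] A) (z : A ⊗[R] A) :
    tensorFstAlgHom φ z = tensorFst φ.toLinearMap z := by
  induction z using TensorProduct.induction_on with
  | zero => simp
  | tmul x y => rfl
  | add u v hu hv => simp only [map_add, hu, hv]

def tensorSndAlgHom (φ : A →ₐ[R] A ⊗[R] A) : A ⊗[R] A →ₐ[R] A ⊗[R] (A ⊗[R] A) :=
  Algebra.TensorProduct.map (AlgHom.id R A) φ

theorem tensorSndAlgHom_apply (φ : A →ₐ[R] A ⊗[R] A) (z : A ⊗[R] A) :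
    tensorSndAlgHom φ z = tensorSnd φ.toLinearMap z := by
  induction z using TensorProduct.induction_on with
  | zero => simp
  | tmul x y => rfl
  | add u v hu hv => simp only [map_add, hu, hv]

def cocycleLhs (φ : A →ₐ[R] A ⊗[R] A) (u : (A ⊗[R] A)ˣ) : (A ⊗[R] (A ⊗[R] A))ˣ :=
  Units.map (emb12AlgHom (R := R) (A := A) : A ⊗[R] A →* A ⊗[R] (A ⊗[R] A)) u *
    Units.map (tensorFstAlgHom φ : A ⊗[R] A →* A ⊗[R] (A ⊗[R] A)) u

def cocycleRhs (φ : A →ₐ[R] A ⊗[R] A) (u : (A ⊗[R] A)ˣ) : (A ⊗[R] (A ⊗[R] A))ˣ :=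
  Units.map
      (Algebra.TensorProduct.includeRight (R := R) (A := A) (B := A ⊗[R] A) :
        A ⊗[R] A →* A ⊗[R] (A ⊗[R] A)) u *
    Units.map (tensorSndAlgHom φ : A ⊗[R] A →* A ⊗[R] (A ⊗[R] A)) u

theorem coe_cocycleLhs (φ : A →ₐ[R] A ⊗[R] A) (u : (A ⊗[R] A)ˣ) :
    (cocycleLhs φ u : A ⊗[R] (A ⊗[R] A)) = emb12 ↑u * tensorFst φ.toLinearMap ↑u := by
  simp [cocycleLhs, emb12AlgHom_apply, tensorFstAlgHom_apply]

theorem coe_cocycleRhs (φ : A →ₐ[R] A ⊗[R] A) (u : (A ⊗[R] A)ˣ) :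
    (cocycleRhs φ u : A ⊗[R] (A ⊗[R] A)) = emb23 ↑u * tensorSnd φ.toLinearMap ↑u := by
  simp [cocycleRhs, emb23_apply, tensorSndAlgHom_apply]

theorem tensorFst_twistMap_twistMap (φ : A →ₐ[R] A ⊗[R] A) (u : (A ⊗[R] A)ˣ) (a : A) :
    tensorFst (twistMap u ↑u⁻¹ φ.toLinearMap) (twistMap u ↑u⁻¹ φ.toLinearMap a) =
      cocycleLhs φ u * tensorFst φ.toLinearMap (φ a) * ↑(cocycleLhs φ u)⁻¹ := by
  rw [tensorFst_twistMap, ← emb12AlgHom_apply, ← emb12AlgHom_apply, ← tensorFstAlgHom_apply,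
    ← tensorFstAlgHom_apply]
  exact map_mul_map_conj_mul_map emb12AlgHom (tensorFstAlgHom φ) u (φ a)

theorem tensorSnd_twistMap_twistMap (φ : A →ₐ[R] A ⊗[R] A) (u : (A ⊗[R] A)ˣ) (a : A) :
    tensorSnd (twistMap u ↑u⁻¹ φ.toLinearMap) (twistMap u ↑u⁻¹ φ.toLinearMap a) =
      cocycleRhs φ u * tensorSnd φ.toLinearMap (φ a) * ↑(cocycleRhs φ u)⁻¹ := by
  rw [tensorSnd_twistMap, emb23_apply, emb23_apply, ← tensorSndAlgHom_apply,
    ← tensorSndAlgHom_apply]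
  exact map_mul_map_conj_mul_map Algebra.TensorProduct.includeRight (tensorSndAlgHom φ) u (φ a)

/-- for a bialgebra `A` and a Drinfeld twist `F`, the twisted comultiplication
`Δ_F(a) = F · Δ(a) · F⁻¹` is coassociative. -/
theorem twisted_comul_coassoc {R A : Type*} [CommRing R] [Ring A] [Bialgebra R A]
    (F Finv : A ⊗[R] A)
    (hF : IsDrinfeldTwist (Coalgebra.comul (R := R) (A := A)) (Coalgebra.counit (R := R) (A := A))
      F Finv) :
    ∀ a : A,
      tensorFst (twistMap F Finv Coalgebra.comul) (twistMap F Finv Coalgebra.comul a) =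
        tensorSnd (twistMap F Finv Coalgebra.comul) (twistMap F Finv Coalgebra.comul a) := by
  obtain ⟨hFFinv, hFinvF, hcocycle, -, -⟩ := hF
  let u : (A ⊗[R] A)ˣ := ⟨F, Finv, hFFinv, hFinvF⟩
  have hu : cocycleLhs (Bialgebra.comulAlgHom R A) u = cocycleRhs (Bialgebra.comulAlgHom R A) u :=
    Units.ext <| by rw [coe_cocycleLhs, coe_cocycleRhs]; exact hcocycle
  intro a
  calc _ = _ := tensorFst_twistMap_twistMap (Bialgebra.comulAlgHom R A) u a
    _ = _ := by rw [hu]; congr 2; exact Coalgebra.coassoc_apply a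
    _ = _ := (tensorSnd_twistMap_twistMap (Bialgebra.comulAlgHom R A) u a).symm
end
end

section
/- Let R be a commutative ring, A a bialgebra over R with comultiplication Δ and counit ε, and let F be a Drinfeld twist for A. Then there is a bialgebra structure on A whose underlying R-algebra structure is the original one, whose comultiplication is the twisted comultiplication Δ_F(a) = F · Δ(a) · F⁻¹, and whose counit is ε. -/
open TensorProduct

noncomputable section

variable {R A : Type*} [CommRing R] [Ring A] [Algebra R A]

/-! Twisting is conjugation by the unit `F`, so `Δ_F` is again an algebra map, and conjugations
compose: `(Δ_F ⊗ id) ∘ Δ_F` is `(Δ ⊗ id) ∘ Δ` conjugated by `F₁₂ · (Δ ⊗ id)(F)`, while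
`(id ⊗ Δ) ∘ Δ_F` is `(id ⊗ Δ) ∘ Δ` conjugated by `F₂₃ · (id ⊗ Δ)(F)`, so coassociativity of `Δ`
and the cocycle equation give coassociativity of `Δ_F`. The counit axioms survive because
`ε ⊗ id` and `id ⊗ ε` are algebra maps sending `F` to `1`, which undoes the conjugation. -/

namespace AlgHom

variable {R B C D : Type*} [CommSemiring R] [Semiring B] [Semiring C] [Semiring D]
  [Algebra R B] [Algebra R C] [Algebra R D]

-- Built from the same composite as `twistMap`, so that the twisted comultiplication of a bialgebra
-- is `twistMap` definitionally.
def twist (φ : B →ₐ[R] C) (u : Cˣ) : B →ₐ[R] C :=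
  .ofLinearMap (LinearMap.mulRight R ↑u⁻¹ ∘ₗ LinearMap.mulLeft R ↑u ∘ₗ φ.toLinearMap)
    (by simp) (fun x y => by simp [mul_assoc])

theorem twist_apply (φ : B →ₐ[R] C) (u : Cˣ) (b : B) : φ.twist u b = u * φ b * ↑u⁻¹ := rfl

theorem twist_one (φ : B →ₐ[R] C) : φ.twist 1 = φ := by
  ext; simp [twist_apply]

theorem twist_twist (φ : B →ₐ[R] C) (u v : Cˣ) : (φ.twist u).twist v = φ.twist (v * u) := by
  ext; simp [twist_apply, mul_assoc]

theorem twist_comp (φ : B →ₐ[R] C) (u : Cˣ) (χ : D →ₐ[R] B) :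
    (φ.twist u).comp χ = (φ.comp χ).twist u := rfl

theorem comp_twist (ψ : C →ₐ[R] D) (φ : B →ₐ[R] C) (u : Cˣ) :
    ψ.comp (φ.twist u) = (ψ.comp φ).twist (Units.map ψ u) := by
  ext; simp [twist_apply]

theorem twist_comp_twist (ψ : C →ₐ[R] D) (φ : B →ₐ[R] C) (u : Cˣ) (v : Dˣ) :
    (ψ.twist v).comp (φ.twist u) = (ψ.comp φ).twist (v * Units.map ψ u) := by
  rw [twist_comp, comp_twist, twist_twist]

theorem comp_twist_of_map_eq_one (ψ : C →ₐ[R] D) (φ : B →ₐ[R] C) {u : Cˣ} (hu : ψ u = 1) :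
    ψ.comp (φ.twist u) = ψ.comp φ := by
  rw [comp_twist, show Units.map (ψ : C →* D) u = 1 from Units.ext hu, twist_one]

end AlgHom

namespace Algebra.TensorProduct

variable {R B C D : Type*} [CommSemiring R] [Semiring B] [Semiring C] [Semiring D]
  [Algebra R B] [Algebra R C] [Algebra R D]

theorem map_twist_id (φ : B →ₐ[R] C) (u : Cˣ) :
    map (φ.twist u) (AlgHom.id R D) =
      (map φ (AlgHom.id R D)).twist (Units.map (includeLeft : C →ₐ[R] C ⊗[R] D) u) := by
  refine ext' fun b d => ?_
  simp [AlgHom.twist_apply]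

theorem map_id_twist (φ : B →ₐ[R] C) (u : Cˣ) :
    map (AlgHom.id R D) (φ.twist u) =
      (map (AlgHom.id R D) φ).twist (Units.map (includeRight : C →ₐ[R] D ⊗[R] C) u) := by
  refine ext' fun d b => ?_
  simp [AlgHom.twist_apply]

end Algebra.TensorProduct

open Algebra.TensorProduct in
theorem AlgHom.twist_coassoc {R A : Type*} [CommSemiring R] [Semiring A] [Algebra R A]
    (Δ : A →ₐ[R] A ⊗[R] A) (u : (A ⊗[R] A)ˣ)
    (hΔ : (Algebra.TensorProduct.assoc R R R A A A).toAlgHom.comp ((map Δ (.id R A)).comp Δ) =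
      (map (.id R A) Δ).comp Δ)
    (hu : Algebra.TensorProduct.assoc R R R A A A ((u : A ⊗[R] A) ⊗ₜ[R] (1 : A)) *
        Algebra.TensorProduct.assoc R R R A A A (map Δ (.id R A) u) =
      ((1 : A) ⊗ₜ[R] (u : A ⊗[R] A)) * map (.id R A) Δ u) :
    (Algebra.TensorProduct.assoc R R R A A A).toAlgHom.comp
        ((map (Δ.twist u) (.id R A)).comp (Δ.twist u)) =
      (map (.id R A) (Δ.twist u)).comp (Δ.twist u) := by
  rw [map_twist_id, map_id_twist, AlgHom.twist_comp_twist, AlgHom.twist_comp_twist,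
    AlgHom.comp_twist, hΔ]
  congr 1
  ext
  simpa using hu

theorem emb12_apply (x : A ⊗[R] A) :
    emb12 x = Algebra.TensorProduct.assoc R R R A A A (x ⊗ₜ[R] (1 : A)) := by
  induction x using TensorProduct.induction_on with
  | zero => simp
  | tmul a b => rfl
  | add x y hx hy => simp [hx, hy, add_tmul]

namespace IsDrinfeldTwist

open Bialgebra Coalgebra Algebra.TensorProduct

variable {R A : Type*} [CommRing R] [Ring A] [Bialgebra R A] {F Finv : A ⊗[R] A}

def unit (hF : IsDrinfeldTwist (comul (R := R) (A := A)) (counit (R := R)) F Finv) :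
    (A ⊗[R] A)ˣ :=
  ⟨F, Finv, hF.1, hF.2.1⟩

theorem assoc_cocycle (hF : IsDrinfeldTwist (comul (R := R) (A := A)) (counit (R := R)) F Finv) :
    Algebra.TensorProduct.assoc R R R A A A (F ⊗ₜ[R] (1 : A)) *
        Algebra.TensorProduct.assoc R R R A A A (map (comulAlgHom R A) (.id R A) F) =
      ((1 : A) ⊗ₜ[R] F) * map (.id R A) (comulAlgHom R A) F := by
  rw [← emb12_apply]
  exact hF.2.2.1

theorem map_counit_id (hF : IsDrinfeldTwist (comul (R := R) (A := A)) (counit (R := R)) F Finv) :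
    map (counitAlgHom R A) (.id R A) F = 1 :=
  (Algebra.TensorProduct.lid R A).injective (by rw [map_one]; exact hF.2.2.2.1)

theorem map_id_counit (hF : IsDrinfeldTwist (comul (R := R) (A := A)) (counit (R := R)) F Finv) :
    map (.id R A) (counitAlgHom R A) F = 1 :=
  (Algebra.TensorProduct.rid R R A).injective (by rw [map_one]; exact hF.2.2.2.2)

end IsDrinfeldTwist

/-- for a bialgebra `A` and a Drinfeld twist `F`, there is a bialgebra structure
on `A` whose underlying `R`-algebra structure is the original one, whose comultiplication is
the twisted comultiplication `Δ_F(a) = F · Δ(a) · F⁻¹`, and whose counit is `ε`.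
(The comultiplication and counit of the new structure are compared via `HEq` since their
types mention the module structure coming from the new bialgebra structure; all data on the
right-hand sides is taken with respect to the original instance `inst`.) -/
theorem twisted_bialgebra_exists {R A : Type*} [CommRing R] [Ring A] [inst : Bialgebra R A]
    (F Finv : A ⊗[R] A)
    (hF : IsDrinfeldTwist (Coalgebra.comul (R := R) (A := A)) (Coalgebra.counit (R := R) (A := A))
      F Finv) :
    ∃ B : Bialgebra R A,
      B.toAlgebra = inst.toAlgebra ∧
      HEq B.toCoalgebraStruct.comul
        (@twistMap R A _ _ inst.toAlgebra F Finv inst.toCoalgebraStruct.comul) ∧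
      HEq B.toCoalgebraStruct.counit inst.toCoalgebraStruct.counit := by
  refine ⟨.ofAlgHom ((Bialgebra.comulAlgHom R A).twist hF.unit) (Bialgebra.counitAlgHom R A)
    ((Bialgebra.comulAlgHom R A).twist_coassoc _ ?_ hF.assoc_cocycle) ?_ ?_, rfl, HEq.rfl, HEq.rfl⟩
  · exact AlgHom.toLinearMap_injective Coalgebra.coassoc
  · rw [AlgHom.comp_twist_of_map_eq_one _ _ hF.map_counit_id]
    exact AlgHom.toLinearMap_injective Coalgebra.rTensor_counit_comp_comul
  · rw [AlgHom.comp_twist_of_map_eq_one _ _ hF.map_id_counit]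
    exact AlgHom.toLinearMap_injective Coalgebra.lTensor_counit_comp_comul
end
end

section
/- Let R be a commutative ring, A a Hopf algebra over R with comultiplication Δ, counit ε and antipode S, and let F be a Drinfeld twist for A with v = Σᵢ fᵢ⁽¹⁾ · S(fᵢ⁽²⁾) invertible in A. Define the twisted antipode S_F(a) = v · S(a) · v⁻¹ and the twisted comultiplication Δ_F(a) = F · Δ(a) · F⁻¹. Then S_F satisfies the antipode axioms for Δ_F: for every a ∈ A, μ((S_F ⊗ id)(Δ_F(a))) = ε(a)·1 and μ((id ⊗ S_F)(Δ_F(a))) = ε(a)·1, where μ is the multiplication map A ⊗ A → A. -/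
open TensorProduct

noncomputable section

variable {R A : Type*} [CommRing R] [Ring A] [Algebra R A]

/-!
Write `F⁻¹ = Σ g⁽¹⁾ ⊗ g⁽²⁾`. The maps `x ⊗ y ↦ S(x) c y` and `x ⊗ y ↦ x c S(y)` are a right and
a left action of `A ⊗ A` on `A`, because `S` is an antihomomorphism. Hence for `x = F Δ(a) F⁻¹`
one gets `Σ S(x⁽¹⁾) v⁻¹ x⁽²⁾ = ((v⁻¹ ◁ F) ◁ Δ(a)) ◁ F⁻¹`, and everything reduces to the untwisted
antipode axiom once we know `v⁻¹ = Σ S(g⁽¹⁾) g⁽²⁾` (so that `v⁻¹ ◁ F = 1 ◁ F⁻¹F = 1`).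
That formula for `v⁻¹` comes from the cocycle equation, rewritten as
`F₂₃⁻¹ F₁₂ = (id ⊗ Δ)(F) · (Δ ⊗ id)(F⁻¹)`, to which one applies `x ⊗ y ⊗ z ↦ x S(y) z`:
the left side becomes `v · Σ S(g⁽¹⁾) g⁽²⁾`, the right side collapses to `1` by the antipode
axioms and the normalization of `F`.
-/

open Coalgebra HopfAlgebra

namespace HopfAlgebra

section Semiring

variable (R : Type*) {A : Type*} [CommSemiring R] [Semiring A] [HopfAlgebra R A]

def mulAntipodeLeft (c : A) : A ⊗[R] A →ₗ[R] A :=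
  LinearMap.mul' R A ∘ₗ TensorProduct.map (LinearMap.mulRight R c ∘ₗ antipode R) LinearMap.id

def mulAntipodeRight (c : A) : A ⊗[R] A →ₗ[R] A :=
  LinearMap.mul' R A ∘ₗ TensorProduct.map LinearMap.id (LinearMap.mulLeft R c ∘ₗ antipode R)

def mulAntipodeMiddle : A ⊗[R] (A ⊗[R] A) →ₗ[R] A :=
  LinearMap.mul' R A ∘ₗ TensorProduct.map LinearMap.id (mulAntipodeLeft R 1)

variable {R}

@[simp]
lemma mulAntipodeLeft_tmul (c x y : A) :
    mulAntipodeLeft R c (x ⊗ₜ y) = antipode R x * c * y := rfl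

@[simp]
lemma mulAntipodeRight_tmul (c x y : A) :
    mulAntipodeRight R c (x ⊗ₜ y) = x * c * antipode R y := by
  simp [mulAntipodeRight, mul_assoc]

@[simp]
lemma mulAntipodeMiddle_tmul (x : A) (u : A ⊗[R] A) :
    mulAntipodeMiddle R (x ⊗ₜ u) = x * mulAntipodeLeft R 1 u := rfl

lemma mulAntipodeRight_one :
    mulAntipodeRight R (1 : A) = LinearMap.mul' R A ∘ₗ TensorProduct.map LinearMap.id (antipode R) := by
  rw [mulAntipodeRight, LinearMap.mulLeft_one, LinearMap.id_comp]

lemma mulAntipodeLeft_mul (c : A) (X Y : A ⊗[R] A) :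
    mulAntipodeLeft R c (X * Y) = mulAntipodeLeft R (mulAntipodeLeft R c X) Y := by
  induction Y using TensorProduct.induction_on with
  | zero => simp
  | add Y₁ Y₂ h₁ h₂ => simp only [mul_add, map_add, h₁, h₂]
  | tmul s t =>
    rw [mulAntipodeLeft_tmul]
    induction X using TensorProduct.induction_on with
    | zero => simp
    | add X₁ X₂ h₁ h₂ => simp only [add_mul, map_add, h₁, h₂, mul_add]
    | tmul p r =>
      simp [Algebra.TensorProduct.tmul_mul_tmul, antipode_mul_antidistrib, mul_assoc]

lemma mulAntipodeRight_mul (c : A) (X Y : A ⊗[R] A) :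
    mulAntipodeRight R c (X * Y) = mulAntipodeRight R (mulAntipodeRight R c Y) X := by
  induction X using TensorProduct.induction_on with
  | zero => simp
  | add X₁ X₂ h₁ h₂ => simp only [add_mul, map_add, h₁, h₂]
  | tmul p r =>
    rw [mulAntipodeRight_tmul]
    induction Y using TensorProduct.induction_on with
    | zero => simp
    | add Y₁ Y₂ h₁ h₂ => simp only [mul_add, map_add, h₁, h₂, add_mul]
    | tmul s t =>
      simp [Algebra.TensorProduct.tmul_mul_tmul, antipode_mul_antidistrib, mul_assoc]

@[simp]
lemma mulAntipodeLeft_apply_one (c : A) : mulAntipodeLeft R c (1 : A ⊗[R] A) = c := by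
  simp [Algebra.TensorProduct.one_def]

@[simp]
lemma mulAntipodeRight_apply_one (c : A) : mulAntipodeRight R c (1 : A ⊗[R] A) = c := by
  simp [Algebra.TensorProduct.one_def]

lemma mulAntipodeLeft_one_comul (a : A) :
    mulAntipodeLeft R (1 : A) (comul a) = counit (R := R) a • (1 : A) := by
  rw [← (ℛ R a).eq, map_sum]
  simp [sum_antipode_mul_eq_smul]

lemma mulAntipodeRight_one_comul (a : A) :
    mulAntipodeRight R (1 : A) (comul a) = counit (R := R) a • (1 : A) := by
  rw [← (ℛ R a).eq, map_sum]
  simp [sum_mul_antipode_eq_smul]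

lemma mulAntipodeLeft_smul (r : R) (c : A) (X : A ⊗[R] A) :
    mulAntipodeLeft R (r • c) X = r • mulAntipodeLeft R c X := by
  induction X using TensorProduct.induction_on with
  | zero => simp
  | add X₁ X₂ h₁ h₂ => simp only [map_add, h₁, h₂, smul_add]
  | tmul p q => simp

lemma mulAntipodeRight_smul (r : R) (c : A) (X : A ⊗[R] A) :
    mulAntipodeRight R (r • c) X = r • mulAntipodeRight R c X := by
  induction X using TensorProduct.induction_on with
  | zero => simp
  | add X₁ X₂ h₁ h₂ => simp only [map_add, h₁, h₂, smul_add]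
  | tmul p q => simp

lemma mulAntipodeMiddle_tmul_mul_assoc_tmul (x d : A) (u w : A ⊗[R] A) :
    mulAntipodeMiddle R ((x ⊗ₜ u) * TensorProduct.assoc R A A A (w ⊗ₜ d)) =
      x * mulAntipodeRight R 1 w * mulAntipodeLeft R 1 u * d := by
  induction w using TensorProduct.induction_on with
  | zero => simp
  | add w₁ w₂ h₁ h₂ => simp only [TensorProduct.add_tmul, map_add, mul_add, h₁, h₂, add_mul]
  | tmul p q =>
    induction u using TensorProduct.induction_on with
    | zero => simp
    | add u₁ u₂ h₁ h₂ => simp only [TensorProduct.tmul_add, add_mul, map_add, h₁, h₂, mul_add]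
    | tmul s t =>
      simp [Algebra.TensorProduct.tmul_mul_tmul, antipode_mul_antidistrib, mul_assoc]

lemma mul'_map_conj_antipode_id (v w : A) (X : A ⊗[R] A) :
    LinearMap.mul' R A (TensorProduct.map
        (LinearMap.mulRight R w ∘ₗ LinearMap.mulLeft R v ∘ₗ antipode R) LinearMap.id X) =
      v * mulAntipodeLeft R w X := by
  induction X using TensorProduct.induction_on with
  | zero => simp
  | add X₁ X₂ h₁ h₂ => simp only [map_add, h₁, h₂, mul_add]
  | tmul x y => simp [mul_assoc]

lemma mul'_map_id_conj_antipode (v w : A) (X : A ⊗[R] A) :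
    LinearMap.mul' R A (TensorProduct.map LinearMap.id
        (LinearMap.mulRight R w ∘ₗ LinearMap.mulLeft R v ∘ₗ antipode R) X) =
      mulAntipodeRight R v X * w := by
  induction X using TensorProduct.induction_on with
  | zero => simp
  | add X₁ X₂ h₁ h₂ => simp only [map_add, h₁, h₂, add_mul]
  | tmul x y => simp [mul_assoc]

end Semiring

end HopfAlgebra

section Twist

variable {R A : Type*} [CommRing R] [Ring A]

lemma twistMap_apply [Algebra R A] (F Finv : A ⊗[R] A) (D : A →ₗ[R] A ⊗[R] A) (a : A) :
    twistMap F Finv D a = F * D a * Finv := rfl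

lemma emb12_eq_assoc [Algebra R A] (X : A ⊗[R] A) :
    emb12 X = TensorProduct.assoc R A A A (X ⊗ₜ 1) := by
  induction X using TensorProduct.induction_on with
  | zero => simp
  | add X₁ X₂ h₁ h₂ => simp only [map_add, h₁, h₂, TensorProduct.add_tmul]
  | tmul x y => simp [emb12]

lemma coe_emb23 [Algebra R A] :
    ⇑(emb23 : A ⊗[R] A →ₗ[R] A ⊗[R] (A ⊗[R] A)) = Algebra.TensorProduct.includeRight := rfl

lemma coe_tensorFst_comul [Bialgebra R A] :
    ⇑(tensorFst (comul (R := R) (A := A))) =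
      (Algebra.TensorProduct.assoc R R R A A A).toAlgHom.comp
        (Algebra.TensorProduct.map (Bialgebra.comulAlgHom R A) (AlgHom.id R A)) := rfl

lemma coe_counitFst_counit [Bialgebra R A] :
    ⇑(counitFst (counit (R := R) (A := A))) =
      (Algebra.TensorProduct.lid R A).toAlgHom.comp
        (Algebra.TensorProduct.map (Bialgebra.counitAlgHom R A) (AlgHom.id R A)) := rfl

variable [HopfAlgebra R A]

lemma mulAntipodeMiddle_emb23_mul_emb12 (X Y : A ⊗[R] A) :
    mulAntipodeMiddle R (emb23 X * emb12 Y) = mulAntipodeRight R 1 Y * mulAntipodeLeft R 1 X := by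
  rw [emb12_eq_assoc]
  exact (mulAntipodeMiddle_tmul_mul_assoc_tmul 1 1 X Y).trans (by rw [one_mul, mul_one])

lemma mulAntipodeMiddle_tensorSnd_mul_tensorFst (X Y : A ⊗[R] A) :
    mulAntipodeMiddle R (tensorSnd comul X * tensorFst comul Y) =
      counitSnd (counit (R := R)) X * counitFst (counit (R := R)) Y := by
  induction X using TensorProduct.induction_on with
  | zero => simp
  | add X₁ X₂ h₁ h₂ => simp only [map_add, add_mul, h₁, h₂]
  | tmul a b =>
    induction Y using TensorProduct.induction_on with
    | zero => simp
    | add Y₁ Y₂ h₁ h₂ => simp only [map_add, mul_add, h₁, h₂]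
    | tmul c d =>
      change mulAntipodeMiddle R ((a ⊗ₜ comul b) * TensorProduct.assoc R A A A (comul c ⊗ₜ d)) = _
      rw [mulAntipodeMiddle_tmul_mul_assoc_tmul, mulAntipodeRight_one_comul,
        mulAntipodeLeft_one_comul]
      simp [counitSnd, counitFst, smul_comm (counit (R := R) b)]

namespace IsDrinfeldTwist

variable {F Finv : A ⊗[R] A} (hF : IsDrinfeldTwist comul (counit (R := R)) F Finv)
include hF

lemma emb23_inv_mul_emb12 :
    emb23 Finv * emb12 F = tensorSnd comul F * tensorFst comul Finv := by
  obtain ⟨hFFinv, hFinvF, hcocycle, -, -⟩ := hF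
  have hfst : tensorFst comul F * tensorFst comul Finv = 1 := by
    rw [coe_tensorFst_comul, ← map_mul, hFFinv, map_one]
  have hsnd : emb23 Finv * emb23 F = (1 : A ⊗[R] (A ⊗[R] A)) := by
    rw [coe_emb23, ← map_mul, hFinvF, map_one]
  calc emb23 Finv * emb12 F
      = emb23 Finv * (emb12 F * tensorFst comul F) * tensorFst comul Finv := by
        rw [mul_assoc, mul_assoc, hfst, mul_one]
    _ = tensorSnd comul F * tensorFst comul Finv := by
        rw [hcocycle, ← mul_assoc, hsnd, one_mul]

lemma counitFst_inv : counitFst (counit (R := R)) Finv = 1 := by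
  obtain ⟨hFFinv, -, -, hεF, -⟩ := hF
  have := congrArg (counitFst (counit (R := R))) hFFinv
  rwa [coe_counitFst_counit, map_mul, map_one, ← coe_counitFst_counit, hεF, one_mul] at this

lemma mulAntipodeRight_mul_mulAntipodeLeft_inv :
    mulAntipodeRight R 1 F * mulAntipodeLeft R 1 Finv = 1 := by
  have h := mulAntipodeMiddle_emb23_mul_emb12 Finv F
  obtain ⟨-, -, -, -, hFε⟩ := id hF
  rwa [hF.emb23_inv_mul_emb12, mulAntipodeMiddle_tensorSnd_mul_tensorFst, hFε,
    hF.counitFst_inv, mul_one, eq_comm] at h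

end IsDrinfeldTwist

end Twist

/-- for a Hopf algebra `A` with antipode `S` and a Drinfeld twist `F`, with
`v = Σ f⁽¹⁾ · S(f⁽²⁾)` invertible (with inverse `vinv`), the twisted antipode
`S_F(a) = v · S(a) · v⁻¹` satisfies the antipode axioms for the twisted comultiplication
`Δ_F(a) = F · Δ(a) · F⁻¹`: `μ((S_F ⊗ id)(Δ_F a)) = ε(a)·1` and
`μ((id ⊗ S_F)(Δ_F a)) = ε(a)·1`. -/
theorem twisted_antipode_axioms {R A : Type*} [CommRing R] [Ring A] [HopfAlgebra R A]
    (F Finv : A ⊗[R] A)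
    (hF : IsDrinfeldTwist (Coalgebra.comul (R := R) (A := A)) (Coalgebra.counit (R := R) (A := A))
      F Finv)
    (v vinv : A)
    (hv : v = LinearMap.mul' R A
      (TensorProduct.map LinearMap.id (HopfAlgebra.antipode (R := R) (A := A)) F))
    (hvinv : v * vinv = 1 ∧ vinv * v = 1) :
    ∀ a : A,
      LinearMap.mul' R A
          (TensorProduct.map
            (LinearMap.mulRight R vinv ∘ₗ LinearMap.mulLeft R v ∘ₗ
              HopfAlgebra.antipode (R := R) (A := A))
            LinearMap.id
            (twistMap F Finv Coalgebra.comul a)) = Coalgebra.counit (R := R) a • (1 : A) ∧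
      LinearMap.mul' R A
          (TensorProduct.map LinearMap.id
            (LinearMap.mulRight R vinv ∘ₗ LinearMap.mulLeft R v ∘ₗ
              HopfAlgebra.antipode (R := R) (A := A))
            (twistMap F Finv Coalgebra.comul a)) = Coalgebra.counit (R := R) a • (1 : A) := by
  have hv' : v = mulAntipodeRight R 1 F := by rw [hv, mulAntipodeRight_one]; rfl
  have hvinv' : vinv = mulAntipodeLeft R 1 Finv :=
    left_inv_eq_right_inv hvinv.2 (hv' ▸ hF.mulAntipodeRight_mul_mulAntipodeLeft_inv)
  have hFinvF : Finv * F = 1 := hF.2.1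
  have hvinv_F : mulAntipodeLeft R vinv F = 1 := by
    rw [hvinv', ← mulAntipodeLeft_mul, hFinvF, mulAntipodeLeft_apply_one]
  have hv_Finv : mulAntipodeRight R v Finv = 1 := by
    rw [hv', ← mulAntipodeRight_mul, hFinvF, mulAntipodeRight_apply_one]
  intro a
  rw [twistMap_apply, mul'_map_conj_antipode_id, mul'_map_id_conj_antipode]
  constructor
  · rw [mulAntipodeLeft_mul, mulAntipodeLeft_mul, hvinv_F, mulAntipodeLeft_one_comul,
      mulAntipodeLeft_smul, ← hvinv', mul_smul_comm, hvinv.1]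
  · rw [mulAntipodeRight_mul, mulAntipodeRight_mul, hv_Finv, mulAntipodeRight_one_comul,
      mulAntipodeRight_smul, ← hv', smul_mul_assoc, hvinv.1]
end
end

section
/- Let N ≥ 3. In the Lie algebra of N×N complex matrices, the complex linear span L of the set {(1/2)(E_{11} − E_{NN}), E_{1N}} ∪ {E_{1s} : 2 ≤ s ≤ N−1} ∪ {E_{sN} : 2 ≤ s ≤ N−1} is a Lie subalgebra (closed under the bracket), L is solvable, and L has complex dimension 2N − 2. -/
/-!
Write `H = ½(E_zz - E_ww)` for distinct indices `z ≠ w`; every other generator is a matrix unit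
`E_zj` (`j ≠ z`) or `E_iw` (`i ≠ w`). Matrix units are eigenvectors of `ad H`, and the product
rule `E_ij E_kl = δ_jk E_il` shows that two of these units bracket into `ℂ E_zw`. Hence the
derived algebra lies in the span of the units, its derived algebra in `ℂ E_zw`, and the next
term vanishes. The generators are linearly independent because each has an entry at which all
the others vanish (`H` at `(z, z)`), which gives the dimension `1 + (N - 1) + (N - 2)`.
-/

noncomputable section

attribute [local instance 100] LieRing.ofAssociativeRing
attribute [local instance 100] LieAlgebra.ofAssociativeAlgebra

/-- `E N i j` is the `N×N` complex matrix with `1` in entry `(i,j)` and `0` elsewhere.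
Indices are 0-based, so `E N i j` is the matrix unit `E_{i+1,j+1}` in the 1-based
notation of the paper. -/
def E (N : ℕ) (i j : Fin N) : Matrix (Fin N) (Fin N) ℂ :=
  Matrix.single i j 1

section LieBracket

variable {R L : Type*} [CommRing R] [LieRing L] [LieAlgebra R L]

theorem Submodule.lie_mem_of_mem_span {s t : Set L} {p : Submodule R L}
    (h : ∀ a ∈ s, ∀ b ∈ t, ⁅a, b⁆ ∈ p) {x y : L} (hx : x ∈ span R s) (hy : y ∈ span R t) :
    ⁅x, y⁆ ∈ p := by
  have hle : map₂ (LieModule.toEnd R L L).toLinearMap (span R s) (span R t) ≤ p := by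
    rw [map₂_span_span, span_le]
    rintro _ ⟨a, ha, b, hb, rfl⟩
    exact h a ha b hb
  exact hle (apply_mem_map₂ _ hx hy)

theorem LieSubalgebra.isSolvable_of_lie_mem_chain (K : LieSubalgebra R L)
    (V : ℕ → Submodule R L) (hK : K.toSubmodule ≤ V 0)
    (hV : ∀ k, ∀ x ∈ V k, ∀ y ∈ V k, ⁅x, y⁆ ∈ V (k + 1)) {n : ℕ} (hn : V n = ⊥) :
    LieAlgebra.IsSolvable K := by
  have hD : ∀ k, ∀ x ∈ LieAlgebra.derivedSeries R K k, (x : L) ∈ V k := by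
    intro k
    induction k with
    | zero => exact fun x _ => hK x.2
    | succ k ih =>
      intro x hx
      rw [LieAlgebra.derivedSeries_def, LieAlgebra.derivedSeriesOfIdeal_succ,
        ← LieSubmodule.mem_toSubmodule, LieSubmodule.lieIdeal_oper_eq_linear_span'] at hx
      refine (Submodule.span_le (p := (V (k + 1)).comap (K.incl : K →ₗ⁅R⁆ L).toLinearMap)).mpr
        ?_ hx
      rintro _ ⟨a, ha, b, hb, rfl⟩
      exact hV k _ (ih a ha) _ (ih b hb)
  refine LieAlgebra.IsSolvable.mk (R := R) (k := n) (_root_.eq_bot_iff.mpr fun x hx => ?_)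
  have hx0 := hD n x hx
  rw [hn, Submodule.mem_bot] at hx0
  exact (LieSubmodule.mem_bot x).mpr (Subtype.ext hx0)

end LieBracket

theorem Matrix.linearIndependent_of_apply_eq_zero {ι m n R : Type*} [Ring R] [NoZeroDivisors R]
    (v : ι → Matrix m n R) (e : ι → m × n) (hdiag : ∀ i, v i (e i).1 (e i).2 ≠ 0)
    (hoff : ∀ i j, i ≠ j → v j (e i).1 (e i).2 = 0) : LinearIndependent R v := by
  rw [linearIndependent_iff']
  intro s g hg i hi
  have hcoord : ∑ j ∈ s, g j * v j (e i).1 (e i).2 = 0 := by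
    simpa [Matrix.sum_apply] using congr_arg (fun M => M (e i).1 (e i).2) hg
  rw [Finset.sum_eq_single i] at hcoord
  · exact (mul_eq_zero.mp hcoord).resolve_right (hdiag i)
  · intro j _ hji
    simp [hoff i j (Ne.symm hji)]
  · exact fun h => absurd hi h

theorem Fintype.card_subtype_ne_and_ne {α : Type*} [Fintype α] [DecidableEq α] {a b : α}
    (hab : a ≠ b) : Fintype.card {x // x ≠ a ∧ x ≠ b} = Fintype.card α - 2 := by
  rw [Fintype.card_subtype]
  have hpair : Finset.univ.filter (fun x : α => x ≠ a ∧ x ≠ b) = {a, b}ᶜ := by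
    ext
    simp
  rw [hpair, Finset.card_compl, Finset.card_pair hab]

section MatrixUnits

variable {N : ℕ}

theorem E_apply (i j a b : Fin N) : E N i j a b = if i = a ∧ j = b then 1 else 0 := rfl

theorem lie_E_E (i j k l : Fin N) :
    ⁅E N i j, E N k l⁆ = (if j = k then E N i l else 0) - (if l = i then E N k j else 0) := by
  rw [Ring.lie_def]
  congr 1 <;> split_ifs with h
  · subst h; simp [E]
  · simp [E, h]
  · subst h; simp [E]
  · simp [E, h]

theorem lie_E_self_E (a i j : Fin N) :
    ⁅E N a a, E N i j⁆ = ((if a = i then 1 else 0) - (if j = a then 1 else 0) : ℂ) • E N i j := by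
  rw [lie_E_E]
  obtain rfl | hi := eq_or_ne a i <;> obtain rfl | hj := eq_or_ne j a <;> simp [*]

end MatrixUnits

section Carrier

variable {N : ℕ} (z w : Fin N)

def carrierCartan : Matrix (Fin N) (Fin N) ℂ := ((1 : ℂ) / 2) • (E N z z - E N w w)

def carrierNilUnits : Set (Matrix (Fin N) (Fin N) ℂ) :=
  insert (E N z w) {m | ∃ s : Fin N, s ≠ z ∧ s ≠ w ∧ (m = E N z s ∨ m = E N s w)}

def carrierGens : Set (Matrix (Fin N) (Fin N) ℂ) :=
  insert (carrierCartan z w) (carrierNilUnits z w)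

theorem lie_carrierCartan_E_mem_span (i j : Fin N) :
    ⁅carrierCartan z w, E N i j⁆ ∈ ℂ ∙ E N i j := by
  rw [carrierCartan, smul_lie, sub_lie, lie_E_self_E, lie_E_self_E, ← sub_smul, smul_smul]
  exact Submodule.smul_mem _ _ (Submodule.mem_span_singleton_self _)

variable {z w}

theorem exists_eq_E_of_mem_carrierNilUnits (hzw : z ≠ w) {m : Matrix (Fin N) (Fin N) ℂ}
    (hm : m ∈ carrierNilUnits z w) :
    ∃ i j, ((i = z ∧ j ≠ z) ∨ (j = w ∧ i ≠ w)) ∧ m = E N i j := by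
  rcases hm with rfl | ⟨s, hsz, hsw, rfl | rfl⟩
  · exact ⟨z, w, Or.inl ⟨rfl, hzw.symm⟩, rfl⟩
  · exact ⟨z, s, Or.inl ⟨rfl, hsz⟩, rfl⟩
  · exact ⟨s, w, Or.inr ⟨rfl, hsw⟩, rfl⟩

theorem lie_E_E_mem_span_E (hzw : z ≠ w) {i j k l : Fin N}
    (hij : (i = z ∧ j ≠ z) ∨ (j = w ∧ i ≠ w)) (hkl : (k = z ∧ l ≠ z) ∨ (l = w ∧ k ≠ w)) :
    ⁅E N i j, E N k l⁆ ∈ ℂ ∙ E N z w := by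
  rw [lie_E_E]
  refine sub_mem ?_ ?_ <;> split_ifs with h
  · obtain ⟨rfl, rfl⟩ : i = z ∧ l = w := by grind
    exact Submodule.mem_span_singleton_self _
  · exact zero_mem _
  · obtain ⟨rfl, rfl⟩ : k = z ∧ j = w := by grind
    exact Submodule.mem_span_singleton_self _
  · exact zero_mem _

theorem lie_mem_span_carrierNilUnits_of_mem_carrierGens (hzw : z ≠ w)
    {a b : Matrix (Fin N) (Fin N) ℂ}
    (ha : a ∈ carrierGens z w) (hb : b ∈ carrierGens z w) :
    ⁅a, b⁆ ∈ Submodule.span ℂ (carrierNilUnits z w) := by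
  have hcartan : ∀ m ∈ carrierNilUnits z w,
      ⁅carrierCartan z w, m⁆ ∈ Submodule.span ℂ (carrierNilUnits z w) := by
    intro m hm
    obtain ⟨i, j, -, rfl⟩ := exists_eq_E_of_mem_carrierNilUnits hzw hm
    exact Submodule.span_mono (Set.singleton_subset_iff.mpr hm)
      (lie_carrierCartan_E_mem_span z w i j)
  rcases ha with rfl | ha <;> rcases hb with rfl | hb
  · rw [lie_self]
    exact zero_mem _
  · exact hcartan b hb
  · rw [← lie_skew]
    exact neg_mem (hcartan a ha)
  · obtain ⟨i, j, hij, rfl⟩ := exists_eq_E_of_mem_carrierNilUnits hzw ha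
    obtain ⟨k, l, hkl, rfl⟩ := exists_eq_E_of_mem_carrierNilUnits hzw hb
    exact Submodule.span_mono (Set.singleton_subset_iff.mpr (Set.mem_insert _ _))
      (lie_E_E_mem_span_E hzw hij hkl)

theorem lie_mem_span_E_of_mem_carrierNilUnits (hzw : z ≠ w) {a b : Matrix (Fin N) (Fin N) ℂ}
    (ha : a ∈ carrierNilUnits z w) (hb : b ∈ carrierNilUnits z w) : ⁅a, b⁆ ∈ ℂ ∙ E N z w := by
  obtain ⟨i, j, hij, rfl⟩ := exists_eq_E_of_mem_carrierNilUnits hzw ha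
  obtain ⟨k, l, hkl, rfl⟩ := exists_eq_E_of_mem_carrierNilUnits hzw hb
  exact lie_E_E_mem_span_E hzw hij hkl

theorem lie_mem_span_carrierGens (hzw : z ≠ w) {x y : Matrix (Fin N) (Fin N) ℂ}
    (hx : x ∈ Submodule.span ℂ (carrierGens z w)) (hy : y ∈ Submodule.span ℂ (carrierGens z w)) :
    ⁅x, y⁆ ∈ Submodule.span ℂ (carrierGens z w) :=
  Submodule.span_mono (Set.subset_insert _ _) <| Submodule.lie_mem_of_mem_span
    (fun _ ha _ hb => lie_mem_span_carrierNilUnits_of_mem_carrierGens hzw ha hb) hx hy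

def carrierAlgebra (hzw : z ≠ w) : LieSubalgebra ℂ (Matrix (Fin N) (Fin N) ℂ) where
  toSubmodule := Submodule.span ℂ (carrierGens z w)
  lie_mem' := lie_mem_span_carrierGens hzw

instance isSolvable_carrierAlgebra (hzw : z ≠ w) :
    LieAlgebra.IsSolvable (carrierAlgebra hzw) := by
  refine (carrierAlgebra hzw).isSolvable_of_lie_mem_chain
    (fun k => [Submodule.span ℂ (carrierGens z w), Submodule.span ℂ (carrierNilUnits z w),
      ℂ ∙ E N z w].getD k ⊥) le_rfl ?_ (n := 3) rfl
  rintro (_ | _ | _ | k) x hx y hy <;>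
    simp only [List.getD_cons_zero, List.getD_cons_succ, List.getD_nil] at hx hy ⊢
  · exact Submodule.lie_mem_of_mem_span
      (fun _ ha _ hb => lie_mem_span_carrierNilUnits_of_mem_carrierGens hzw ha hb) hx hy
  · exact Submodule.lie_mem_of_mem_span
      (fun _ ha _ hb => lie_mem_span_E_of_mem_carrierNilUnits hzw ha hb) hx hy
  · refine Submodule.lie_mem_of_mem_span (fun a ha b hb => ?_) hx hy
    rw [Set.mem_singleton_iff.mp ha, Set.mem_singleton_iff.mp hb, lie_self]
    exact zero_mem _
  · rw [(Submodule.mem_bot ℂ).mp hx, zero_lie]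
    exact zero_mem _

variable (z w) in
def carrierFamily : Fin N ⊕ {s : Fin N // s ≠ z ∧ s ≠ w} → Matrix (Fin N) (Fin N) ℂ :=
  Sum.elim (fun j => if j = z then carrierCartan z w else E N z j) (fun s => E N s w)

theorem range_carrierFamily (hzw : z ≠ w) : Set.range (carrierFamily z w) = carrierGens z w := by
  ext m
  simp only [carrierFamily, Set.mem_range, Sum.exists, Sum.elim_inl, Sum.elim_inr, Subtype.exists,
    carrierGens, carrierNilUnits, Set.mem_insert_iff, Set.mem_ofPred_eq]
  constructor
  · rintro (⟨j, rfl⟩ | ⟨s, ⟨hsz, hsw⟩, rfl⟩)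
    · split_ifs with hj
      · exact Or.inl rfl
      · obtain rfl | hjw := eq_or_ne j w
        · exact Or.inr (Or.inl rfl)
        · exact Or.inr (Or.inr ⟨j, hj, hjw, Or.inl rfl⟩)
    · exact Or.inr (Or.inr ⟨s, hsz, hsw, Or.inr rfl⟩)
  · rintro (rfl | rfl | ⟨s, hsz, hsw, rfl | rfl⟩)
    · exact Or.inl ⟨z, if_pos rfl⟩
    · exact Or.inl ⟨w, if_neg hzw.symm⟩
    · exact Or.inl ⟨s, if_neg hsz⟩
    · exact Or.inr ⟨s, ⟨hsz, hsw⟩, rfl⟩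

theorem linearIndependent_carrierFamily (hzw : z ≠ w) :
    LinearIndependent ℂ (carrierFamily z w) := by
  refine Matrix.linearIndependent_of_apply_eq_zero _
    (Sum.elim (fun j => (z, j)) (fun s => ((s : Fin N), w))) ?_ ?_
  · rintro (j | s)
    · by_cases hj : j = z <;> simp [carrierFamily, carrierCartan, E_apply, hj, hzw.symm]
    · simp [carrierFamily, E_apply]
  · rintro (j | ⟨s, hsz, hsw⟩) (j' | ⟨s', hsz', hsw'⟩) h <;>
      simp only [carrierFamily, Sum.elim_inl, Sum.elim_inr] <;>
      (try split_ifs) <;> simp [carrierCartan, E_apply] <;> grind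

theorem finrank_span_carrierGens (hzw : z ≠ w) :
    Module.finrank ℂ (Submodule.span ℂ (carrierGens z w)) = 2 * N - 2 := by
  have hN : 1 < N := by simpa using Fintype.one_lt_card_iff.mpr ⟨z, w, hzw⟩
  rw [← range_carrierFamily hzw, finrank_span_eq_card (linearIndependent_carrierFamily hzw),
    Fintype.card_sum, Fintype.card_subtype_ne_and_ne hzw, Fintype.card_fin]
  omega

end Carrier

/-- for `N ≥ 3`, the complex span `L` of
`{(1/2)(E_{11} - E_{NN}), E_{1N}} ∪ {E_{1s} : 2 ≤ s ≤ N-1} ∪ {E_{sN} : 2 ≤ s ≤ N-1}`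
(1-based indices; `s` ranges 0-based over `0 < s < N-1`) is closed under the Lie bracket,
is a solvable Lie algebra, and has complex dimension `2N - 2`. -/
theorem carrier_subalgebra_solvable (N : ℕ) (hN : 3 ≤ N)
    (S : Set (Matrix (Fin N) (Fin N) ℂ))
    (hS : S = insert
        (((1 : ℂ) / 2) •
          (E N ⟨0, by omega⟩ ⟨0, by omega⟩ - E N ⟨N - 1, by omega⟩ ⟨N - 1, by omega⟩))
        (insert (E N ⟨0, by omega⟩ ⟨N - 1, by omega⟩)
          {m | ∃ s : Fin N, 0 < s.val ∧ s.val < N - 1 ∧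
            (m = E N ⟨0, by omega⟩ s ∨ m = E N s ⟨N - 1, by omega⟩)})) :
    (∀ x ∈ Submodule.span ℂ S, ∀ y ∈ Submodule.span ℂ S, ⁅x, y⁆ ∈ Submodule.span ℂ S) ∧
    (∃ K : LieSubalgebra ℂ (Matrix (Fin N) (Fin N) ℂ),
      K.toSubmodule = Submodule.span ℂ S ∧ LieAlgebra.IsSolvable K) ∧
    Module.finrank ℂ ↥(Submodule.span ℂ S) = 2 * N - 2 := by
  have hzw : (⟨0, by omega⟩ : Fin N) ≠ ⟨N - 1, by omega⟩ := by
    rw [ne_eq, Fin.mk.injEq]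
    omega
  have hS' : S = carrierGens ⟨0, by omega⟩ ⟨N - 1, by omega⟩ := by
    have hs (s : Fin N) :
        (0 < s.val ∧ s.val < N - 1) ↔ s ≠ ⟨0, by omega⟩ ∧ s ≠ ⟨N - 1, by omega⟩ := by
      simp only [ne_eq, Fin.ext_iff]
      omega
    simp only [hS, carrierGens, carrierNilUnits, carrierCartan, ← and_assoc, hs]
  subst hS'
  exact ⟨fun x hx y hy => lie_mem_span_carrierGens hzw hx hy,
    ⟨carrierAlgebra hzw, rfl, inferInstance⟩, finrank_span_carrierGens hzw⟩
end
end
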